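/- Fix k ≥ 2, β > 0, q ∈ ℝ, σ₁ ∈ {-1,1}^k, and define p_σ = e^{q(σ·σ₁)²}/H(q) with H(q) = ∑_σ e^{q(σ·σ₁)²}. Then (p_σ) satisfies the Lagrange stationarity system log p_{σ₀} = (β²/2) ∑_σ p_σ (σ·σ₀)² + λ − 1 for all σ₀ ∈ {-1,1}^k (for some λ ∈ ℝ) if and only if q = (β²/(2k(k−1)))(H'(q)/H(q) − k). -/

import Mathlib

/-!
Gauging by `σ₁` turns the weight `e^{q(σ·σ₁)²}` into a function of the magnetisation `∑ τᵢ`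
alone, which is invariant under permuting coordinates. Hence the second-moment matrix
`∑_σ e^{q(σ·σ₁)²} σᵢ σⱼ` equals `H` on the diagonal and `σ₁ᵢ σ₁ⱼ D` off it, for one number `D`,
so `∑_σ p_σ (σ·σ₀)² = k + (D/H)((σ₀·σ₁)² - k)` and `H' = kH + k(k-1)D`. As
`log p_{σ₀} = q(σ₀·σ₁)² - log H`, the stationarity system equates two affine functions of
`(σ₀·σ₁)²`, which takes both values `k²` and `(k-2)²`; so it holds iff the slopes agree,
`q = β²D/(2H)`.
-/

open Finset Real

/-- The real sign of a Boolean spin: `true ↦ 1`, `false ↦ -1`. -/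
noncomputable def sgn (b : Bool) : ℝ := if b then 1 else -1

/-- Standard inner product of two spin vectors in `{-1,1}^k`. -/
noncomputable def sdot {k : ℕ} (σ τ : Fin k → Bool) : ℝ := ∑ i, sgn (σ i) * sgn (τ i)

lemma sgn_mul_self (b : Bool) : sgn b * sgn b = 1 := by
  cases b <;> norm_num [sgn]

lemma sgn_beq (a b : Bool) : sgn (a == b) = sgn a * sgn b := by
  cases a <;> cases b <;> norm_num [sgn]

section Spins

variable {k : ℕ}

lemma sdot_self (σ : Fin k → Bool) : sdot σ σ = k := by
  simp [sdot, sgn_mul_self]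

lemma sdot_update_not_self (σ : Fin k → Bool) (i : Fin k) :
    sdot (Function.update σ i (!σ i)) σ = k - 2 := by
  have hterm : ∀ m, sgn (Function.update σ i (!σ i) m) * sgn (σ m) =
      1 - if m = i then 2 else 0 := by
    intro m
    rcases eq_or_ne m i with rfl | hm
    · cases σ m <;> norm_num [sgn]
    · simp [hm, sgn_mul_self]
  simp [sdot, hterm, Finset.sum_sub_distrib]

/-- On spins `==` is multiplication, so this is `τ ↦ (τᵢ σ₁ᵢ)ᵢ`. -/
def spinGauge (σ₁ : Fin k → Bool) : Equiv.Perm (Fin k → Bool) :=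
  Function.Involutive.toPerm (fun τ i => τ i == σ₁ i) fun τ => by
    funext i
    show ((τ i == σ₁ i) == σ₁ i) = τ i
    cases τ i <;> cases σ₁ i <;> rfl

lemma spinGauge_apply (σ₁ τ : Fin k → Bool) (i : Fin k) :
    spinGauge σ₁ τ i = (τ i == σ₁ i) := rfl

lemma sdot_spinGauge (σ₁ σ₀ τ : Fin k → Bool) :
    sdot (spinGauge σ₁ τ) σ₀ = ∑ i, sgn (σ₀ i) * sgn (σ₁ i) * sgn (τ i) := by
  refine Finset.sum_congr rfl fun i _ => ?_
  rw [spinGauge_apply, sgn_beq]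
  ring

lemma sdot_spinGauge_self (σ₁ τ : Fin k → Bool) : sdot (spinGauge σ₁ τ) σ₁ = ∑ i, sgn (τ i) := by
  simp only [sdot_spinGauge, sgn_mul_self, one_mul]

end Spins

section Correlation

variable {ι : Type*} [Fintype ι] [DecidableEq ι] (f : ℝ → ℝ)

noncomputable def spinCorrelation (i j : ι) : ℝ :=
  ∑ τ : ι → Bool, f (∑ m, sgn (τ m)) * (sgn (τ i) * sgn (τ j))

lemma spinCorrelation_self (i : ι) :
    spinCorrelation f i i = ∑ τ : ι → Bool, f (∑ m, sgn (τ m)) := by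
  simp [spinCorrelation, sgn_mul_self]

lemma spinCorrelation_perm (e : Equiv.Perm ι) (i j : ι) :
    spinCorrelation f (e i) (e j) = spinCorrelation f i j := by
  unfold spinCorrelation
  rw [← Equiv.sum_comp (Equiv.arrowCongr e (Equiv.refl Bool))]
  refine Finset.sum_congr rfl fun τ _ => ?_
  simp only [Equiv.arrowCongr_apply, Equiv.coe_refl, Function.comp_apply, id,
    Equiv.symm_apply_apply]
  rw [Equiv.sum_comp e.symm (fun m => sgn (τ m))]

lemma spinCorrelation_eq_of_ne {i j i' j' : ι} (hij : i ≠ j) (hij' : i' ≠ j') :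
    spinCorrelation f i j = spinCorrelation f i' j' := by
  obtain ⟨e, hi, hj⟩ := MulAction.is_two_pretransitive_iff.mp
    (Equiv.Perm.isMultiplyPretransitive ι 2) hij hij'
  rw [← hi, ← hj, Equiv.Perm.smul_def, Equiv.Perm.smul_def, spinCorrelation_perm]

end Correlation

lemma sum_sum_mul_mul_of_diag_offDiag {ι R : Type*} [Fintype ι] [DecidableEq ι] [CommRing R]
    (ε : ι → R) (C : ι → ι → R) {a d : R} (hdiag : ∀ i, C i i = a)
    (hoff : ∀ i j, i ≠ j → C i j = d) :
    ∑ i, ∑ j, ε i * ε j * C i j = d * (∑ i, ε i) ^ 2 + (a - d) * ∑ i, ε i ^ 2 := by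
  have hC : ∀ i j, C i j = d + if i = j then a - d else 0 := by
    intro i j
    rcases eq_or_ne i j with rfl | hij
    · simp [hdiag]
    · simp [hoff i j hij, hij]
  rw [sq, Finset.sum_mul_sum, Finset.mul_sum, Finset.mul_sum]
  simp only [hC, mul_add, Finset.sum_add_distrib, mul_ite, mul_zero, Finset.sum_ite_eq,
    Finset.mem_univ, if_true, Finset.mul_sum]
  congr 1 <;> refine Finset.sum_congr rfl fun i _ => ?_
  · exact Finset.sum_congr rfl fun j _ => by ring
  · ring

lemma sum_weight_mul_sdot_sq {k : ℕ} (f : ℝ → ℝ) (σ₁ σ₀ : Fin k → Bool) {i j : Fin k}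
    (hij : i ≠ j) :
    ∑ σ : Fin k → Bool, f (sdot σ σ₁) * sdot σ σ₀ ^ 2 =
      k * ∑ σ : Fin k → Bool, f (sdot σ σ₁) +
        spinCorrelation f i j * (sdot σ₀ σ₁ ^ 2 - k) := by
  set ε : Fin k → ℝ := fun m => sgn (σ₀ m) * sgn (σ₁ m)
  have hgauge : ∀ g : ℝ → ℝ → ℝ, ∑ σ : Fin k → Bool, g (sdot σ σ₁) (sdot σ σ₀) =
      ∑ τ : Fin k → Bool, g (∑ m, sgn (τ m)) (∑ m, ε m * sgn (τ m)) := fun g => by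
    rw [← Equiv.sum_comp (spinGauge σ₁)]
    simp only [sdot_spinGauge_self, sdot_spinGauge, ε]
  have hexpand : ∑ τ : Fin k → Bool, f (∑ m, sgn (τ m)) * (∑ m, ε m * sgn (τ m)) ^ 2 =
      ∑ m, ∑ n, ε m * ε n * spinCorrelation f m n := by
    simp only [sq, Finset.sum_mul_sum]
    simp only [Finset.mul_sum]
    rw [Finset.sum_comm]
    refine Finset.sum_congr rfl fun m _ => ?_
    rw [Finset.sum_comm]
    refine Finset.sum_congr rfl fun n _ => ?_
    simp only [spinCorrelation, Finset.mul_sum]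
    exact Finset.sum_congr rfl fun τ _ => by ring
  have hε : ∀ m, ε m ^ 2 = 1 := fun m => by
    rw [mul_pow, sq, sq, sgn_mul_self, sgn_mul_self, one_mul]
  have hεsum : ∑ m, ε m = sdot σ₀ σ₁ := rfl
  rw [hgauge (fun s t => f s * t ^ 2), hgauge (fun s _ => f s), hexpand,
    sum_sum_mul_mul_of_diag_offDiag ε _ (spinCorrelation_self f)
      (fun m n hmn => spinCorrelation_eq_of_ne f hmn hij)]
  simp only [hε, hεsum, Finset.sum_const, Finset.card_univ, Fintype.card_fin, nsmul_eq_mul,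
    mul_one]
  ring

lemma eq_of_forall_mul_sdot_sq_add_eq {k : ℕ} (hk : 2 ≤ k) (σ₁ : Fin k → Bool) {a b c d : ℝ}
    (h : ∀ σ₀ : Fin k → Bool, a * sdot σ₀ σ₁ ^ 2 + c = b * sdot σ₀ σ₁ ^ 2 + d) : a = b := by
  have hk' : (4 * k - 4 : ℝ) ≠ 0 := by
    have : (2 : ℝ) ≤ k := by exact_mod_cast hk
    linarith
  have h₁ := h σ₁
  have h₂ := h (Function.update σ₁ ⟨0, by omega⟩ (!σ₁ ⟨0, by omega⟩))
  rw [sdot_self] at h₁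
  rw [sdot_update_not_self] at h₂
  have hab : (a - b) * (4 * k - 4) = 0 := by linear_combination h₁ - h₂
  simpa [hk', sub_eq_zero] using hab

theorem stmt19_general (k : ℕ) (hk : 2 ≤ k) (β : ℝ) (q : ℝ)
    (σ₁ : Fin k → Bool)
    (H H' : ℝ → ℝ)
    (hH : ∀ q, H q = ∑ σ : Fin k → Bool, Real.exp (q * (sdot σ σ₁) ^ 2))
    (hH' : ∀ q, H' q = ∑ σ : Fin k → Bool, (sdot σ σ₁) ^ 2 * Real.exp (q * (sdot σ σ₁) ^ 2))
    (p : (Fin k → Bool) → ℝ) (hp : ∀ σ, p σ = Real.exp (q * (sdot σ σ₁) ^ 2) / H q) :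
    (∃ lam : ℝ, ∀ σ₀ : Fin k → Bool,
        Real.log (p σ₀) = β ^ 2 / 2 * (∑ σ : Fin k → Bool, p σ * (sdot σ σ₀) ^ 2) + lam - 1) ↔
      q = β ^ 2 / (2 * k * (k - 1)) * (H' q / H q - k) := by
  obtain ⟨i, j, hij⟩ : ∃ i j : Fin k, i ≠ j :=
    ⟨⟨0, by omega⟩, ⟨1, by omega⟩, by simp [Fin.ext_iff]⟩
  set w : ℝ → ℝ := fun s => exp (q * s ^ 2)
  set D := spinCorrelation w i j
  have hHpos : 0 < H q := hH q ▸ Finset.sum_pos (fun _ _ => exp_pos _) univ_nonempty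
  have hH'q : H' q = k * H q + D * (k ^ 2 - k) := by
    simpa [hH, hH', mul_comm, sdot_self] using sum_weight_mul_sdot_sq w σ₁ σ₁ hij
  have hlog : ∀ σ₀, log (p σ₀) = q * sdot σ₀ σ₁ ^ 2 - log (H q) := fun σ₀ => by
    rw [hp, log_div (exp_ne_zero _) hHpos.ne', log_exp]
  have hmean : ∀ σ₀, ∑ σ, p σ * sdot σ σ₀ ^ 2 = k + D / H q * (sdot σ₀ σ₁ ^ 2 - k) :=
    fun σ₀ => by
      simp only [hp, div_mul_eq_mul_div, ← Finset.sum_div]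
      rw [sum_weight_mul_sdot_sq w σ₁ σ₀ hij, ← hH]
      field_simp
      ring
  have hslope : β ^ 2 / (2 * k * (k - 1)) * (H' q / H q - k) = β ^ 2 / 2 * (D / H q) := by
    have hk1 : (k - 1 : ℝ) ≠ 0 := by
      have : (2 : ℝ) ≤ k := by exact_mod_cast hk
      linarith
    rw [hH'q]
    field_simp
    ring
  rw [hslope]
  constructor
  · rintro ⟨lam, hlam⟩
    refine eq_of_forall_mul_sdot_sq_add_eq hk σ₁ (c := -log (H q))
      (d := β ^ 2 / 2 * k * (1 - D / H q) + lam - 1) fun σ₀ => ?_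
    have h := hlam σ₀
    rw [hlog, hmean] at h
    linear_combination h
  · intro hq
    refine ⟨1 - log (H q) - β ^ 2 / 2 * k * (1 - D / H q), fun σ₀ => ?_⟩
    rw [hlog, hmean]
    linear_combination sdot σ₀ σ₁ ^ 2 * hq

theorem stmt19 (k : ℕ) (hk : 2 ≤ k) (β : ℝ) (hβ : 0 < β) (q : ℝ)
    (σ₁ : Fin k → Bool)
    (H H' : ℝ → ℝ)
    (hH : ∀ q, H q = ∑ σ : Fin k → Bool, Real.exp (q * (sdot σ σ₁) ^ 2))
    (hH' : ∀ q, H' q = ∑ σ : Fin k → Bool, (sdot σ σ₁) ^ 2 * Real.exp (q * (sdot σ σ₁) ^ 2))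
    (p : (Fin k → Bool) → ℝ) (hp : ∀ σ, p σ = Real.exp (q * (sdot σ σ₁) ^ 2) / H q) :
    (∃ lam : ℝ, ∀ σ₀ : Fin k → Bool,
        Real.log (p σ₀) = β ^ 2 / 2 * (∑ σ : Fin k → Bool, p σ * (sdot σ σ₀) ^ 2) + lam - 1) ↔
      q = β ^ 2 / (2 * k * (k - 1)) * (H' q / H q - k) :=
  stmt19_general k hk β q σ₁ H H' hH hH' p hp
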